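/- Let (A, ⊗, 1) be a tensor extriangulated category such that Rad(A) is a set. Then Rad(A) is a coherent frame: the greatest element A = rad(1) is compact, the meet of two compact elements rad(X) ∧ rad(Y) = rad(X ⊗ Y) is compact, and every radical thick tensor ideal is the join of the compact elements rad(X) for X in it. -/

import Mathlib

/-! Abstract setting for a tensor extriangulated category, at the level of
isomorphism classes of objects: the classes form a commutative monoid `C` under `⊗`
(with unit `1`), there is a zero object `zero`, a ternary relation `Tri X Y Z`
recording the extriangles `X → Y → Z ⤳`, and a relation `Summand X Y` recording
that `X` is a direct summand of `Y`. -/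

structure ThickTensorIdeal (C : Type*) [CommMonoid C] (zero : C)
    (Tri : C → C → C → Prop) (Summand : C → C → Prop) where
  carrier : Set C
  zero_mem : zero ∈ carrier
  tensor_mem : ∀ (a : C) {x : C}, x ∈ carrier → a * x ∈ carrier
  summand_mem : ∀ {x y : C}, Summand x y → y ∈ carrier → x ∈ carrier
  ext₃ : ∀ {X Y Z : C}, Tri X Y Z → X ∈ carrier → Y ∈ carrier → Z ∈ carrier
  ext₂ : ∀ {X Y Z : C}, Tri X Y Z → X ∈ carrier → Z ∈ carrier → Y ∈ carrier
  ext₁ : ∀ {X Y Z : C}, Tri X Y Z → Y ∈ carrier → Z ∈ carrier → X ∈ carrier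

structure RadicalThickTensorIdeal (C : Type*) [CommMonoid C] (zero : C)
    (Tri : C → C → C → Prop) (Summand : C → C → Prop) extends
    ThickTensorIdeal C zero Tri Summand where
  radical : ∀ {x : C} {n : ℕ}, 1 ≤ n → x ^ n ∈ carrier → x ∈ carrier

def radClosure {C : Type*} [CommMonoid C] (zero : C)
    (Tri : C → C → C → Prop) (Summand : C → C → Prop) (s : Set C) : Set C :=
  ⋂₀ {t : Set C | (∃ I : RadicalThickTensorIdeal C zero Tri Summand, I.carrier = t) ∧ s ⊆ t}

/-! The structural input is that for a radical thick tensor ideal `I` and an object `v`, the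
colon `{u | v ⊗ u ∈ I}` is again a radical thick tensor ideal (this is where exactness of
`v ⊗ -` is used). Hence `v ⊗ X ∈ I` forces `v ⊗ rad(X) ⊆ I`; applied twice this gives
`rad(X) ⊗ rad(Y) ⊆ rad(X ⊗ Y)`, and radicality turns `U ⊗ U ∈ rad(X ⊗ Y)` into
`U ∈ rad(X ⊗ Y)`. Compactness comes from the fact that a directed union of radical thick tensor
ideals is one, so `rad(s)` is the union of the `rad(F)` over finite `F ⊆ s`. -/

open Set

theorem Set.Finite.exists_finite_subset_biUnion {α ι : Type*} {F : Set α} (hF : F.Finite)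
    {S : Set ι} {t : ι → Set α} (h : F ⊆ ⋃ i ∈ S, t i) :
    ∃ T ⊆ S, T.Finite ∧ F ⊆ ⋃ i ∈ T, t i := by
  rw [biUnion_eq_iUnion] at h
  obtain ⟨I, hI, hFI⟩ := finite_subset_iUnion hF h
  exact ⟨Subtype.val '' I, Subtype.coe_image_subset S I, hI.image _, by rwa [biUnion_image]⟩

theorem Directed.exists_mem_mem_of_mem_iUnion {α ι : Type*} {t : ι → Set α}
    (ht : Directed (· ⊆ ·) t) {x y : α} (hx : x ∈ ⋃ i, t i) (hy : y ∈ ⋃ i, t i) :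
    ∃ k, x ∈ t k ∧ y ∈ t k := by
  obtain ⟨i, hi⟩ := mem_iUnion.1 hx
  obtain ⟨j, hj⟩ := mem_iUnion.1 hy
  obtain ⟨k, hik, hjk⟩ := ht i j
  exact ⟨k, hik hi, hjk hj⟩

section

variable {C : Type*} [CommMonoid C] {zero : C} {Tri : C → C → C → Prop}
  {Summand : C → C → Prop}

namespace RadicalThickTensorIdeal

theorem carrier_eq_univ_of_one_mem (I : RadicalThickTensorIdeal C zero Tri Summand)
    (h : 1 ∈ I.carrier) : I.carrier = univ :=
  eq_univ_of_forall fun a => mul_one a ▸ I.tensor_mem a h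

def iUnionOfDirected {ι : Type*} [Nonempty ι] (I : ι → RadicalThickTensorIdeal C zero Tri Summand)
    (hI : Directed (· ⊆ ·) fun i => (I i).carrier) :
    RadicalThickTensorIdeal C zero Tri Summand where
  carrier := ⋃ i, (I i).carrier
  zero_mem := mem_iUnion.2 ⟨Classical.arbitrary ι, (I _).zero_mem⟩
  tensor_mem a _ hx := by
    obtain ⟨i, hi⟩ := mem_iUnion.1 hx
    exact mem_iUnion.2 ⟨i, (I i).tensor_mem a hi⟩
  summand_mem h hy := by
    obtain ⟨i, hi⟩ := mem_iUnion.1 hy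
    exact mem_iUnion.2 ⟨i, (I i).summand_mem h hi⟩
  ext₃ h hX hY := by
    obtain ⟨k, hXk, hYk⟩ := hI.exists_mem_mem_of_mem_iUnion hX hY
    exact mem_iUnion.2 ⟨k, (I k).ext₃ h hXk hYk⟩
  ext₂ h hX hZ := by
    obtain ⟨k, hXk, hZk⟩ := hI.exists_mem_mem_of_mem_iUnion hX hZ
    exact mem_iUnion.2 ⟨k, (I k).ext₂ h hXk hZk⟩
  ext₁ h hY hZ := by
    obtain ⟨k, hYk, hZk⟩ := hI.exists_mem_mem_of_mem_iUnion hY hZ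
    exact mem_iUnion.2 ⟨k, (I k).ext₁ h hYk hZk⟩
  radical hn hx := by
    obtain ⟨i, hi⟩ := mem_iUnion.1 hx
    exact mem_iUnion.2 ⟨i, (I i).radical hn hi⟩

def colon (tensor_zero : ∀ a : C, a * zero = zero)
    (tri_tensor : ∀ (a : C) {X Y Z : C}, Tri X Y Z → Tri (a * X) (a * Y) (a * Z))
    (summand_tensor : ∀ (a : C) {X Y : C}, Summand X Y → Summand (a * X) (a * Y))
    (I : RadicalThickTensorIdeal C zero Tri Summand) (v : C) :
    RadicalThickTensorIdeal C zero Tri Summand where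
  carrier := {u | v * u ∈ I.carrier}
  zero_mem := by simpa only [mem_ofPred_eq, tensor_zero] using I.zero_mem
  tensor_mem a x hx := by simpa only [mem_ofPred_eq, mul_left_comm v a x] using I.tensor_mem a hx
  summand_mem h := I.summand_mem (summand_tensor v h)
  ext₃ h := I.ext₃ (tri_tensor v h)
  ext₂ h := I.ext₂ (tri_tensor v h)
  ext₁ h := I.ext₁ (tri_tensor v h)
  radical {x n} hn hx := by
    obtain ⟨m, rfl⟩ := Nat.exists_eq_add_of_le' hn
    have hpow : (v * x) ^ (m + 1) = v ^ m * (v * x ^ (m + 1)) := by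
      rw [mul_pow, pow_succ v, mul_assoc]
    exact I.radical hn (hpow ▸ I.tensor_mem (v ^ m) hx)

end RadicalThickTensorIdeal

theorem mem_radClosure {s : Set C} {x : C} :
    x ∈ radClosure zero Tri Summand s ↔
      ∀ I : RadicalThickTensorIdeal C zero Tri Summand, s ⊆ I.carrier → x ∈ I.carrier := by
  simp only [radClosure, mem_sInter, mem_ofPred_eq, and_imp, forall_exists_index]
  exact ⟨fun h I hs => h _ I rfl hs, fun h _ I hI hs => hI ▸ h I (hI ▸ hs)⟩

theorem subset_radClosure (s : Set C) : s ⊆ radClosure zero Tri Summand s :=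
  fun _ hx => mem_radClosure.2 fun _ hs => hs hx

theorem radClosure_subset {s : Set C} (I : RadicalThickTensorIdeal C zero Tri Summand)
    (h : s ⊆ I.carrier) : radClosure zero Tri Summand s ⊆ I.carrier :=
  fun _ hx => mem_radClosure.1 hx I h

theorem radClosure_carrier (I : RadicalThickTensorIdeal C zero Tri Summand) :
    radClosure zero Tri Summand I.carrier = I.carrier :=
  (radClosure_subset I subset_rfl).antisymm (subset_radClosure _)

variable (zero Tri Summand) in
def radClosureIdeal (s : Set C) : RadicalThickTensorIdeal C zero Tri Summand where
  carrier := radClosure zero Tri Summand s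
  zero_mem := mem_radClosure.2 fun I _ => I.zero_mem
  tensor_mem a _ hx := mem_radClosure.2 fun I hs => I.tensor_mem a (mem_radClosure.1 hx I hs)
  summand_mem h hy := mem_radClosure.2 fun I hs => I.summand_mem h (mem_radClosure.1 hy I hs)
  ext₃ h hX hY := mem_radClosure.2 fun I hs =>
    I.ext₃ h (mem_radClosure.1 hX I hs) (mem_radClosure.1 hY I hs)
  ext₂ h hX hZ := mem_radClosure.2 fun I hs =>
    I.ext₂ h (mem_radClosure.1 hX I hs) (mem_radClosure.1 hZ I hs)
  ext₁ h hY hZ := mem_radClosure.2 fun I hs =>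
    I.ext₁ h (mem_radClosure.1 hY I hs) (mem_radClosure.1 hZ I hs)
  radical hn hx := mem_radClosure.2 fun I hs => I.radical hn (mem_radClosure.1 hx I hs)

theorem radClosure_mono {s t : Set C} (h : s ⊆ t) :
    radClosure zero Tri Summand s ⊆ radClosure zero Tri Summand t :=
  radClosure_subset (radClosureIdeal zero Tri Summand t) (h.trans (subset_radClosure t))

theorem radClosure_singleton_one : radClosure zero Tri Summand {(1 : C)} = univ :=
  (radClosureIdeal zero Tri Summand {1}).carrier_eq_univ_of_one_mem (subset_radClosure _ rfl)

theorem radClosure_singleton_mul_subset_right (X Y : C) :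
    radClosure zero Tri Summand {X * Y} ⊆ radClosure zero Tri Summand {Y} :=
  radClosure_subset (radClosureIdeal zero Tri Summand {Y}) <|
    singleton_subset_iff.2 <| (radClosureIdeal zero Tri Summand {Y}).tensor_mem X <|
      subset_radClosure _ rfl

theorem exists_finite_subset_of_mem_radClosure {s : Set C} {x : C}
    (hx : x ∈ radClosure zero Tri Summand s) :
    ∃ F ⊆ s, F.Finite ∧ x ∈ radClosure zero Tri Summand F := by
  have : Nonempty {F : Set C // F ⊆ s ∧ F.Finite} := ⟨⟨∅, empty_subset s, finite_empty⟩⟩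
  let D := RadicalThickTensorIdeal.iUnionOfDirected
    (fun F : {F : Set C // F ⊆ s ∧ F.Finite} => radClosureIdeal zero Tri Summand F.1)
    fun F G => ⟨⟨F.1 ∪ G.1, union_subset F.2.1 G.2.1, F.2.2.union G.2.2⟩,
      radClosure_mono subset_union_left, radClosure_mono subset_union_right⟩
  have hsD : s ⊆ D.carrier := fun y hy =>
    mem_iUnion.2 ⟨⟨{y}, singleton_subset_iff.2 hy, finite_singleton y⟩, subset_radClosure _ rfl⟩
  obtain ⟨⟨F, hFs, hF⟩, hxF⟩ := mem_iUnion.1 (radClosure_subset D hsD hx)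
  exact ⟨F, hFs, hF, hxF⟩

theorem exists_finite_radClosure_singleton_subset_biUnion {X : C}
    {S : Set (RadicalThickTensorIdeal C zero Tri Summand)}
    (h : radClosure zero Tri Summand {X} ⊆ radClosure zero Tri Summand (⋃ J ∈ S, J.carrier)) :
    ∃ T ⊆ S, T.Finite ∧
      radClosure zero Tri Summand {X} ⊆ radClosure zero Tri Summand (⋃ J ∈ T, J.carrier) := by
  obtain ⟨F, hFS, hF, hXF⟩ := exists_finite_subset_of_mem_radClosure (h (subset_radClosure _ rfl))
  obtain ⟨T, hTS, hT, hFT⟩ := hF.exists_finite_subset_biUnion hFS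
  exact ⟨T, hTS, hT, (radClosure_subset (radClosureIdeal zero Tri Summand F)
    (singleton_subset_iff.2 hXF)).trans (radClosure_mono hFT)⟩

theorem mul_mem_of_mem_radClosure_singleton (tensor_zero : ∀ a : C, a * zero = zero)
    (tri_tensor : ∀ (a : C) {X Y Z : C}, Tri X Y Z → Tri (a * X) (a * Y) (a * Z))
    (summand_tensor : ∀ (a : C) {X Y : C}, Summand X Y → Summand (a * X) (a * Y))
    {I : RadicalThickTensorIdeal C zero Tri Summand} {v X U : C} (hX : v * X ∈ I.carrier)
    (hU : U ∈ radClosure zero Tri Summand {X}) : v * U ∈ I.carrier :=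
  radClosure_subset (I.colon tensor_zero tri_tensor summand_tensor v)
    (singleton_subset_iff.2 hX) hU

theorem mul_mem_radClosure_singleton_mul (tensor_zero : ∀ a : C, a * zero = zero)
    (tri_tensor : ∀ (a : C) {X Y Z : C}, Tri X Y Z → Tri (a * X) (a * Y) (a * Z))
    (summand_tensor : ∀ (a : C) {X Y : C}, Summand X Y → Summand (a * X) (a * Y))
    {X Y U V : C} (hU : U ∈ radClosure zero Tri Summand {X})
    (hV : V ∈ radClosure zero Tri Summand {Y}) : U * V ∈ radClosure zero Tri Summand {X * Y} := by
  have hXV : X * V ∈ radClosure zero Tri Summand {X * Y} :=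
    mul_mem_of_mem_radClosure_singleton tensor_zero tri_tensor summand_tensor
      (I := radClosureIdeal zero Tri Summand {X * Y}) (subset_radClosure _ rfl) hV
  rw [mul_comm U]
  exact mul_mem_of_mem_radClosure_singleton tensor_zero tri_tensor summand_tensor
    (I := radClosureIdeal zero Tri Summand {X * Y}) (mul_comm X V ▸ hXV) hU

theorem radClosure_singleton_inter_singleton (tensor_zero : ∀ a : C, a * zero = zero)
    (tri_tensor : ∀ (a : C) {X Y Z : C}, Tri X Y Z → Tri (a * X) (a * Y) (a * Z))
    (summand_tensor : ∀ (a : C) {X Y : C}, Summand X Y → Summand (a * X) (a * Y)) (X Y : C) :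
    radClosure zero Tri Summand {X} ∩ radClosure zero Tri Summand {Y} =
      radClosure zero Tri Summand {X * Y} := by
  refine Subset.antisymm ?_ (subset_inter ?_ (radClosure_singleton_mul_subset_right X Y))
  · rintro U ⟨hUX, hUY⟩
    exact (radClosureIdeal zero Tri Summand {X * Y}).radical one_le_two
      (pow_two U ▸ mul_mem_radClosure_singleton_mul tensor_zero tri_tensor summand_tensor hUX hUY)
  · exact mul_comm Y X ▸ radClosure_singleton_mul_subset_right Y X

end

/-- `Rad(A)` is a coherent frame: the top element is `rad(1)` (which equals everything),
the meet of the compact elements `rad(X)` and `rad(Y)` is `rad(X ⊗ Y)`, each `rad(X)` is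
compact, and every radical thick tensor ideal is the join of the compact elements `rad(X)`
for `X` in it. -/
theorem stmt_5 {C : Type*} [CommMonoid C] (zero : C)
    (Tri : C → C → C → Prop) (Summand : C → C → Prop)
    (tensor_zero : ∀ a : C, a * zero = zero)
    (tri_tensor : ∀ (a : C) {X Y Z : C}, Tri X Y Z → Tri (a * X) (a * Y) (a * Z))
    (summand_tensor : ∀ (a : C) {X Y : C}, Summand X Y → Summand (a * X) (a * Y)) :
    (radClosure zero Tri Summand {(1 : C)} = Set.univ) ∧
    (∀ X Y : C, radClosure zero Tri Summand {X} ∩ radClosure zero Tri Summand {Y} =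
        radClosure zero Tri Summand {X * Y}) ∧
    (∀ (X : C) (S : Set (RadicalThickTensorIdeal C zero Tri Summand)),
        radClosure zero Tri Summand {X} ⊆
            radClosure zero Tri Summand (⋃ J ∈ S, J.carrier) →
          ∃ T : Set (RadicalThickTensorIdeal C zero Tri Summand), T ⊆ S ∧ T.Finite ∧
            radClosure zero Tri Summand {X} ⊆
              radClosure zero Tri Summand (⋃ J ∈ T, J.carrier)) ∧
    (∀ I : RadicalThickTensorIdeal C zero Tri Summand,
        radClosure zero Tri Summand I.carrier = I.carrier) :=
  ⟨radClosure_singleton_one,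
    radClosure_singleton_inter_singleton tensor_zero tri_tensor summand_tensor,
    fun _ _ => exists_finite_radClosure_singleton_subset_biUnion,
    radClosure_carrier⟩
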